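/- Let 0 < gamma < 1, lambda > 0, and let A_1, ..., A_T be vectors in R^d. Define V_t = sum_{s=1}^t gamma^{-s} A_s A_s^T + lambda gamma^{-t} I_d (with V_0 = lambda I_d) and tilde_V_t = sum_{s=1}^t gamma^{-2s} A_s A_s^T + lambda gamma^{-2t} I_d. Then sum_{t=1}^T min(1, ||A_t||^2_{V_{t-1}^{-1} tilde_V_{t-1} V_{t-1}^{-1}}) <= 2 sum_{t=1}^T log(1 + gamma^{-t} ||A_t||^2_{V_{t-1}^{-1}}) <= 2 log(det(V_T) / lambda^d). -/

import Mathlib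

set_option autoImplicit false

open Matrix Finset

/-- The norm `‖x‖_M = sqrt (xᵀ M x)` associated with a (positive definite) matrix `M`. -/
noncomputable def matNorm {d : ℕ} (M : Matrix (Fin d) (Fin d) ℝ) (x : Fin d → ℝ) : ℝ :=
  Real.sqrt (x ⬝ᵥ M *ᵥ x)

section helpers
variable {d : ℕ}

lemma vecMulVec_mulVec' (a x : Fin d → ℝ) : (vecMulVec a a) *ᵥ x = (a ⬝ᵥ x) • a := by
  ext i
  simp [vecMulVec, mulVec, dotProduct, Finset.sum_mul, Finset.mul_sum]
  ring_nf

lemma psd_vecMulVec (a : Fin d → ℝ) : (vecMulVec a a).PosSemidef := by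
  refine Matrix.PosSemidef.of_dotProduct_mulVec_nonneg ?_ ?_
  · ext i j; simp [vecMulVec, conjTranspose, mul_comm]
  · intro x
    rw [vecMulVec_mulVec']
    simp only [star_trivial, dotProduct_smul, smul_eq_mul]
    rw [dotProduct_comm x a]
    exact mul_self_nonneg _

lemma psd_smul {M : Matrix (Fin d) (Fin d) ℝ} (hM : M.PosSemidef) {c : ℝ} (hc : 0 ≤ c) :
    (c • M).PosSemidef := by
  refine Matrix.PosSemidef.of_dotProduct_mulVec_nonneg ?_ ?_
  · unfold Matrix.IsHermitian at *
    rw [conjTranspose_smul, hM.1]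
    simp
  · intro x
    rw [smul_mulVec, dotProduct_smul, smul_eq_mul]
    exact mul_nonneg hc (hM.dotProduct_mulVec_nonneg x)

lemma posdef_smul_one {c : ℝ} (hc : 0 < c) : (c • (1 : Matrix (Fin d) (Fin d) ℝ)).PosDef := by
  refine Matrix.PosDef.of_dotProduct_mulVec_pos ?_ ?_
  · unfold Matrix.IsHermitian
    rw [conjTranspose_smul, conjTranspose_one]
    simp
  · intro x hx
    rw [smul_mulVec, one_mulVec, dotProduct_smul, smul_eq_mul]
    have h := (dotProduct_star_self_pos_iff (v := x)).2 hx
    simp only [star_trivial] at h ⊢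
    exact mul_pos hc h

lemma psd_sum (s : Finset ℕ) (c : ℕ → ℝ) (v : ℕ → Fin d → ℝ) (hc : ∀ i ∈ s, 0 ≤ c i) :
    (∑ i ∈ s, c i • vecMulVec (v i) (v i)).PosSemidef := by
  induction s using Finset.induction_on with
  | empty => simpa using Matrix.PosSemidef.zero
  | insert _ _ hnotmem ih =>
    rw [Finset.sum_insert hnotmem]
    exact Matrix.PosSemidef.add (psd_smul (psd_vecMulVec _) (hc _ (Finset.mem_insert_self _ _)))
      (ih fun i hi => hc i (Finset.mem_insert_of_mem hi))

lemma one_le_det_one_add_psd {Q : Matrix (Fin d) (Fin d) ℝ} (hQ : Q.PosSemidef) :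
    (1:ℝ) ≤ ((1 : Matrix (Fin d) (Fin d) ℝ) + Q).det := by
  have hH : ((1 : Matrix (Fin d) (Fin d) ℝ) + Q).IsHermitian :=
    Matrix.isHermitian_one.add hQ.1
  have hev : ∀ i, (1:ℝ) ≤ hH.eigenvalues i := by
    intro i
    rw [hH.eigenvalues_eq]
    set v : Fin d → ℝ := ⇑(hH.eigenvectorBasis i) with hv
    have hnorm : ‖hH.eigenvectorBasis i‖ = 1 := hH.eigenvectorBasis.orthonormal.1 i
    have hvv : v ⬝ᵥ v = 1 := by
      have h1 : (inner ℝ (hH.eigenvectorBasis i) (hH.eigenvectorBasis i) : ℝ) = 1 := by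
        rw [real_inner_self_eq_norm_sq, hnorm]; norm_num
      rw [← h1, PiLp.inner_apply]
      simp [dotProduct, RCLike.inner_apply, mul_comm]
      exact Finset.sum_congr rfl fun j _ => (sq _).symm
    have hQv : 0 ≤ v ⬝ᵥ Q *ᵥ v := by simpa using hQ.dotProduct_mulVec_nonneg v
    simp only [star_trivial, add_mulVec, one_mulVec, dotProduct_add, RCLike.re_to_real]
    rw [hvv]
    linarith
  rw [hH.det_eq_prod_eigenvalues]
  simp only [RCLike.ofReal_real_eq_id, id]
  have h := Finset.prod_le_prod (s := Finset.univ) (f := fun _ : Fin d => (1:ℝ))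
    (g := fun i => hH.eigenvalues i) (fun i _ => zero_le_one) (fun i _ => hev i)
  simpa using h

lemma det_le_det_add_psd {M P : Matrix (Fin d) (Fin d) ℝ} (hM : M.PosDef) (hP : P.PosSemidef) :
    M.det ≤ (M + P).det := by
  obtain ⟨S, hS, hSS⟩ : ∃ S : Matrix (Fin d) (Fin d) ℝ, S.PosSemidef ∧ S * S = M :=
    by open scoped MatrixOrder in exact ⟨CFC.sqrt M, (CFC.sqrt_nonneg M).posSemidef, CFC.sqrt_mul_sqrt_self M hM.posSemidef.nonneg⟩
  have hdetM : 0 < M.det := hM.det_pos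
  have hdetS : IsUnit S.det := by
    refine isUnit_iff_ne_zero.2 fun h => ?_
    rw [← hSS, Matrix.det_mul, h, mul_zero] at hdetM
    exact lt_irrefl _ hdetM
  have hSinv : S * S⁻¹ = 1 := Matrix.mul_nonsing_inv S hdetS
  have hSinv' : S⁻¹ * S = 1 := Matrix.nonsing_inv_mul S hdetS
  have hSHerm : (S⁻¹)ᴴ = S⁻¹ := by
    rw [Matrix.conjTranspose_nonsing_inv, hS.1]
  have hQ : (S⁻¹ * P * S⁻¹).PosSemidef := by
    have h := hP.mul_mul_conjTranspose_same S⁻¹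
    rwa [hSHerm] at h
  have hkey : S * ((1 : Matrix (Fin d) (Fin d) ℝ) + S⁻¹ * P * S⁻¹) * S = M + P := by
    rw [Matrix.mul_add, Matrix.mul_one, Matrix.add_mul, hSS]
    congr 1
    calc S * (S⁻¹ * P * S⁻¹) * S = (S * S⁻¹) * P * (S⁻¹ * S) := by
          noncomm_ring
      _ = P := by rw [hSinv, hSinv', Matrix.one_mul, Matrix.mul_one]
  have hdet : (M + P).det = M.det * ((1 : Matrix (Fin d) (Fin d) ℝ) + S⁻¹ * P * S⁻¹).det := by
    rw [← hkey, Matrix.det_mul, Matrix.det_mul, ← hSS, Matrix.det_mul]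
    ring
  rw [hdet]
  nlinarith [one_le_det_one_add_psd hQ]

lemma det_add_smul_vecMulVec {M : Matrix (Fin d) (Fin d) ℝ} (hM : M.PosDef) (c : ℝ)
    (a : Fin d → ℝ) :
    (M + c • vecMulVec a a).det = M.det * (1 + c * (a ⬝ᵥ M⁻¹ *ᵥ a)) := by
  have h1 : c • vecMulVec a a = Matrix.replicateCol Unit (c • a) * Matrix.replicateRow Unit a := by
    rw [← Matrix.vecMulVec_eq]
    ext i j
    simp [vecMulVec]
    ring
  have hdet : IsUnit M.det := hM.det_pos.ne'.isUnit
  rw [h1, Matrix.det_add_replicateCol_mul_replicateRow hdet]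
  congr 1
  rw [← Matrix.replicateRow_vecMul, Matrix.det_unique]
  simp only [Matrix.add_apply, Matrix.one_apply_eq, Matrix.replicateRow_mul_replicateCol_apply]
  rw [← Matrix.dotProduct_mulVec]
  rw [Matrix.mulVec_smul, dotProduct_smul, smul_eq_mul]

lemma min_one_le_two_log {x : ℝ} (hx : 0 ≤ x) : min 1 x ≤ 2 * Real.log (1 + x) := by
  have h1x : (0:ℝ) < 1 + x := by linarith
  have hlog : 1 - (1+x)⁻¹ ≤ Real.log (1 + x) := by
    have h := Real.log_le_sub_one_of_pos (inv_pos.2 h1x)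
    rw [Real.log_inv] at h; linarith
  have hinv : (1+x) * (1+x)⁻¹ = 1 := mul_inv_cancel₀ h1x.ne'
  have hu : 0 < (1+x)⁻¹ := inv_pos.2 h1x
  rcases le_total x 1 with h|h
  · rw [min_eq_right h]
    nlinarith [mul_nonneg hx (sub_nonneg.2 h)]
  · rw [min_eq_left h]
    nlinarith

lemma herm_dot {M : Matrix (Fin d) (Fin d) ℝ} (hM : M.IsHermitian) (u z : Fin d → ℝ) :
    u ⬝ᵥ M *ᵥ z = (M *ᵥ u) ⬝ᵥ z := by
  rw [dotProduct_mulVec]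
  congr 1
  ext j
  have hij : ∀ i j, M j i = M i j := fun i j => by
    have h := congrFun (congrFun hM.eq i) j
    simpa [Matrix.conjTranspose_apply] using h
  simp only [vecMul, mulVec, dotProduct]
  exact Finset.sum_congr rfl fun i _ => by rw [hij j i]; ring

lemma telescope_sum (g : ℕ → ℝ) (T : ℕ) :
    ∑ t ∈ Icc 1 T, (g t - g (t - 1)) = g T - g 0 := by
  induction T with
  | zero => simp
  | succ n ih =>
    rw [Finset.sum_Icc_succ_top (Nat.le_add_left 1 n), ih]
    simp

end helpers

/-- elliptical-potential-type inequality for the discounted design matrices. -/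
theorem sum_min_one_norm_sq_le {d : ℕ} (T : ℕ) (A : ℕ → (Fin d → ℝ))
    (γ lam : ℝ) (hγ0 : 0 < γ) (hγ1 : γ < 1) (hlam : 0 < lam)
    (V tV : ℕ → Matrix (Fin d) (Fin d) ℝ)
    (hV : ∀ t, V t = ∑ s ∈ Icc 1 t, (γ ^ s)⁻¹ • vecMulVec (A s) (A s)
        + (lam * (γ ^ t)⁻¹) • (1 : Matrix (Fin d) (Fin d) ℝ))
    (htV : ∀ t, tV t = ∑ s ∈ Icc 1 t, (γ ^ (2 * s))⁻¹ • vecMulVec (A s) (A s)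
        + (lam * (γ ^ (2 * t))⁻¹) • (1 : Matrix (Fin d) (Fin d) ℝ)) :
    (∑ t ∈ Icc 1 T, min 1 (matNorm ((V (t - 1))⁻¹ * tV (t - 1) * (V (t - 1))⁻¹) (A t) ^ 2))
      ≤ 2 * ∑ t ∈ Icc 1 T, Real.log (1 + (γ ^ t)⁻¹ * matNorm ((V (t - 1))⁻¹) (A t) ^ 2)
    ∧
    2 * (∑ t ∈ Icc 1 T, Real.log (1 + (γ ^ t)⁻¹ * matNorm ((V (t - 1))⁻¹) (A t) ^ 2))
      ≤ 2 * Real.log ((V T).det / lam ^ d) := by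
  have hγpow : ∀ k : ℕ, (0:ℝ) < γ ^ k := fun k => pow_pos hγ0 k
  have hVpos : ∀ t, (V t).PosDef := by
    intro t
    rw [hV t]
    exact Matrix.PosDef.posSemidef_add
      (psd_sum _ _ _ fun s _ => (inv_pos.2 (hγpow s)).le)
      (posdef_smul_one (by positivity))
  have htVpsd : ∀ t, (tV t).PosSemidef := by
    intro t
    rw [htV t]
    exact Matrix.PosSemidef.add
      (psd_sum _ _ _ fun s _ => (inv_pos.2 (hγpow (2*s))).le)
      (psd_smul Matrix.PosSemidef.one (by positivity))
  -- abbreviations per t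
  have key1 : ∀ t ∈ Icc 1 T,
      min 1 (matNorm ((V (t - 1))⁻¹ * tV (t - 1) * (V (t - 1))⁻¹) (A t) ^ 2)
        ≤ 2 * Real.log (1 + (γ ^ t)⁻¹ * matNorm ((V (t - 1))⁻¹) (A t) ^ 2) := by
    intro t htmem
    obtain ⟨ht1, -⟩ := Finset.mem_Icc.1 htmem
    set k := t - 1 with hk
    set a := A t with ha
    set W := V k with hW
    have hWpos : W.PosDef := hVpos k
    have hWinv : W⁻¹.PosDef := hWpos.inv
    set y := W⁻¹ *ᵥ a with hy
    set x2 := a ⬝ᵥ W⁻¹ *ᵥ a with hx2def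
    have hx2 : 0 ≤ x2 := by simpa using hWinv.posSemidef.dotProduct_mulVec_nonneg a
    have e2 : matNorm W⁻¹ a ^ 2 = x2 := Real.sq_sqrt hx2
    -- step 1 : big quadratic form equals y ⬝ tV' y
    have hbig_eq : a ⬝ᵥ (W⁻¹ * tV k * W⁻¹) *ᵥ a = y ⬝ᵥ tV k *ᵥ y := by
      rw [← Matrix.mulVec_mulVec, ← Matrix.mulVec_mulVec,
        herm_dot hWinv.isHermitian]
    have hbig_nonneg : 0 ≤ a ⬝ᵥ (W⁻¹ * tV k * W⁻¹) *ᵥ a := by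
      rw [hbig_eq]
      simpa using (htVpsd k).dotProduct_mulVec_nonneg y
    have e1 : matNorm (W⁻¹ * tV k * W⁻¹) a ^ 2 = a ⬝ᵥ (W⁻¹ * tV k * W⁻¹) *ᵥ a :=
      Real.sq_sqrt hbig_nonneg
    -- step 2 : tV k ⪯ (γ^k)⁻¹ • W
    have hD : ((γ ^ k)⁻¹ • W - tV k).PosSemidef := by
      rw [hW, hV k, htV k]
      have hexp : (γ ^ k)⁻¹ • ((lam * (γ ^ k)⁻¹) • (1 : Matrix (Fin d) (Fin d) ℝ))
          = (lam * (γ ^ (2 * k))⁻¹) • (1 : Matrix (Fin d) (Fin d) ℝ) := by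
        rw [smul_smul]
        congr 1
        rw [two_mul, pow_add, mul_inv]
        ring
      rw [smul_add, Finset.smul_sum, hexp, add_sub_add_right_eq_sub,
        ← Finset.sum_sub_distrib]
      have hterm : ∀ s ∈ Icc 1 k,
          (γ ^ k)⁻¹ • ((γ ^ s)⁻¹ • vecMulVec (A s) (A s)) - (γ ^ (2 * s))⁻¹ • vecMulVec (A s) (A s)
            = ((γ ^ k)⁻¹ * (γ ^ s)⁻¹ - (γ ^ (2 * s))⁻¹) • vecMulVec (A s) (A s) := by
        intro s _
        rw [smul_smul, sub_smul]
      rw [Finset.sum_congr rfl hterm]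
      refine psd_sum _ _ _ fun s hs => ?_
      obtain ⟨-, hsk⟩ := Finset.mem_Icc.1 hs
      have h1 : γ ^ k ≤ γ ^ s := pow_le_pow_of_le_one hγ0.le hγ1.le hsk
      have h2 : (γ ^ s)⁻¹ ≤ (γ ^ k)⁻¹ := by
        apply inv_anti₀ (hγpow k) h1
      have h3 : (γ ^ (2 * s))⁻¹ = (γ ^ s)⁻¹ * (γ ^ s)⁻¹ := by
        rw [two_mul, pow_add, mul_inv]
      rw [h3]
      have := mul_le_mul_of_nonneg_right h2 (inv_pos.2 (hγpow s)).le
      linarith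
    have hquad : y ⬝ᵥ tV k *ᵥ y ≤ (γ ^ k)⁻¹ * (y ⬝ᵥ W *ᵥ y) := by
      have h := hD.dotProduct_mulVec_nonneg y
      simp only [star_trivial, Matrix.sub_mulVec, dotProduct_sub,
        smul_mulVec, dotProduct_smul, smul_eq_mul] at h
      linarith
    -- step 3 : y ⬝ W y = x2
    have hyW : y ⬝ᵥ W *ᵥ y = x2 := by
      have hWy : W *ᵥ y = a := by
        rw [hy, Matrix.mulVec_mulVec, Matrix.mul_nonsing_inv _ hWpos.det_pos.ne'.isUnit,
          Matrix.one_mulVec]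
      rw [hWy, hy, hx2def, dotProduct_comm]
    -- step 4 : (γ^k)⁻¹ ≤ (γ^t)⁻¹
    have hmono : (γ ^ k)⁻¹ ≤ (γ ^ t)⁻¹ :=
      inv_anti₀ (hγpow t) (pow_le_pow_of_le_one hγ0.le hγ1.le (Nat.sub_le t 1))
    have chain : a ⬝ᵥ (W⁻¹ * tV k * W⁻¹) *ᵥ a ≤ (γ ^ t)⁻¹ * x2 := by
      rw [hbig_eq]
      calc y ⬝ᵥ tV k *ᵥ y ≤ (γ ^ k)⁻¹ * (y ⬝ᵥ W *ᵥ y) := hquad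
        _ = (γ ^ k)⁻¹ * x2 := by rw [hyW]
        _ ≤ (γ ^ t)⁻¹ * x2 := mul_le_mul_of_nonneg_right hmono hx2
    have harg : 0 ≤ (γ ^ t)⁻¹ * x2 := mul_nonneg (inv_pos.2 (hγpow t)).le hx2
    calc min 1 (matNorm (W⁻¹ * tV k * W⁻¹) a ^ 2)
        ≤ min 1 ((γ ^ t)⁻¹ * x2) := by
          rw [e1]; exact min_le_min le_rfl chain
      _ ≤ 2 * Real.log (1 + (γ ^ t)⁻¹ * x2) := min_one_le_two_log harg
      _ = 2 * Real.log (1 + (γ ^ t)⁻¹ * matNorm W⁻¹ a ^ 2) := by rw [e2]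
  constructor
  · calc ∑ t ∈ Icc 1 T, min 1 (matNorm ((V (t - 1))⁻¹ * tV (t - 1) * (V (t - 1))⁻¹) (A t) ^ 2)
        ≤ ∑ t ∈ Icc 1 T, 2 * Real.log (1 + (γ ^ t)⁻¹ * matNorm ((V (t - 1))⁻¹) (A t) ^ 2) :=
          Finset.sum_le_sum key1
      _ = 2 * ∑ t ∈ Icc 1 T, Real.log (1 + (γ ^ t)⁻¹ * matNorm ((V (t - 1))⁻¹) (A t) ^ 2) := by
          rw [Finset.mul_sum]
  · -- second inequality
    have key2 : ∀ t ∈ Icc 1 T,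
        Real.log (1 + (γ ^ t)⁻¹ * matNorm ((V (t - 1))⁻¹) (A t) ^ 2)
          ≤ Real.log (V t).det - Real.log (V (t - 1)).det := by
      intro t htmem
      obtain ⟨ht1, -⟩ := Finset.mem_Icc.1 htmem
      set k := t - 1 with hk
      have hkt : k + 1 = t := Nat.succ_pred_eq_of_pos ht1
      set a := A t with ha
      set W := V k with hWdef
      have hWpos : W.PosDef := hVpos k
      set x2 := a ⬝ᵥ W⁻¹ *ᵥ a with hx2def
      have hx2 : 0 ≤ x2 := by simpa using hWpos.inv.posSemidef.dotProduct_mulVec_nonneg a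
      have e2 : matNorm W⁻¹ a ^ 2 = x2 := Real.sq_sqrt hx2
      set W' := W + (γ ^ t)⁻¹ • vecMulVec a a with hW'
      have hW'pos : W'.PosDef :=
        hWpos.add_posSemidef (psd_smul (psd_vecMulVec a) (inv_pos.2 (hγpow t)).le)
      have hdetW' : W'.det = W.det * (1 + (γ ^ t)⁻¹ * x2) :=
        det_add_smul_vecMulVec hWpos _ a
      set c := lam * (γ ^ t)⁻¹ - lam * (γ ^ k)⁻¹ with hc
      have hcpos : 0 < c := by
        have h1 : γ ^ t < γ ^ k := by
          rw [← hkt]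
          exact pow_lt_pow_right_of_lt_one₀ hγ0 hγ1 (Nat.lt_succ_self k)
        have h2 : (γ ^ k)⁻¹ < (γ ^ t)⁻¹ := by
          apply inv_strictAnti₀ (hγpow t) h1
        rw [hc]
        nlinarith
      have hVt : V t = W' + c • (1 : Matrix (Fin d) (Fin d) ℝ) := by
        have h := hV t
        rw [← hkt, Finset.sum_Icc_succ_top (Nat.le_add_left 1 k)] at h
        rw [← hkt, h, hW', hWdef, hV k, hc, ha, ← hkt, sub_smul]
        abel
      have hdet_le : W'.det ≤ (V t).det := by
        rw [hVt]
        exact det_le_det_add_psd hW'pos (posdef_smul_one hcpos).posSemidef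
      have hargpos : (0:ℝ) < 1 + (γ ^ t)⁻¹ * x2 := by
        have := mul_nonneg (inv_pos.2 (hγpow t)).le hx2
        linarith
      have hW'detpos : 0 < W'.det := hW'pos.det_pos
      have hlog1 : Real.log W'.det = Real.log W.det + Real.log (1 + (γ ^ t)⁻¹ * x2) := by
        rw [hdetW', Real.log_mul hWpos.det_pos.ne' hargpos.ne']
      have hlog2 : Real.log W'.det ≤ Real.log (V t).det :=
        Real.log_le_log hW'detpos hdet_le
      rw [e2]
      linarith
    have htel : ∑ t ∈ Icc 1 T, (Real.log (V t).det - Real.log (V (t-1)).det)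
        = Real.log (V T).det - Real.log (V 0).det :=
      telescope_sum (fun t => Real.log (V t).det) T
    have hsum : ∑ t ∈ Icc 1 T, Real.log (1 + (γ ^ t)⁻¹ * matNorm ((V (t - 1))⁻¹) (A t) ^ 2)
        ≤ Real.log (V T).det - Real.log (V 0).det := by
      rw [← htel]
      exact Finset.sum_le_sum key2
    have hV0 : (V 0).det = lam ^ d := by
      rw [hV 0]
      have : Icc 1 0 = (∅ : Finset ℕ) := Finset.Icc_eq_empty (by omega)
      rw [this]
      simp [Matrix.det_smul]
    have hrhs : Real.log ((V T).det / lam ^ d)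
        = Real.log (V T).det - Real.log (V 0).det := by
      rw [hV0, Real.log_div (hVpos T).det_pos.ne' (by positivity)]
    rw [hrhs]
    linarith [hsum]
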